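/- Let ψ_σ(x) = (2πσ²)^{-1/4} exp(-x²/(4σ²)) be the normalized Gaussian, ρ(x,y) = ψ_σ(x) ψ_σ(y), and g(ξ) = exp(-ξ²/(2ℓ²)). Then the Hilbert–Schmidt dephasing loss equals C₂^g(ρ) = ∬ (1 - g(x-y)²) |ρ(x,y)|² dx dy = 1 − 1/√(1 + 4σ²/ℓ²). -/

import Mathlib

/-! Since `|ρ(x,y)|² = (2πσ²)⁻¹ exp(-a x² - a y²)` with `a = 1/(2σ²)` and `g(x-y)² = exp(-c (x-y)²)`
with `c = 1/ℓ²`, the loss is `(2πσ²)⁻¹` times a difference of two Gaussian integrals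
`∬ exp(-a x² - b y² - c (x-y)²) = π / √(ab + bc + ca)` (complete the square in `y`, then integrate
in `x`), taken at `c = 0` and at `c = 1/ℓ²`. These evaluate to `2πσ²` and `2πσ² / √(1 + 4σ²/ℓ²)`. -/

open MeasureTheory Real

noncomputable def psiGauss (σ : ℝ) (x : ℝ) : ℝ :=
  (2 * π * σ ^ 2) ^ (-(1 / 4 : ℝ)) * Real.exp (-(x ^ 2) / (4 * σ ^ 2))

section GaussianIntegrals

variable {a b c : ℝ}

lemma integral_exp_neg_mul_sq_sub_mul_sub_sq (hbc : b + c ≠ 0) (x : ℝ) :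
    ∫ y : ℝ, exp (-b * y ^ 2 - c * (x - y) ^ 2) =
      √(π / (b + c)) * exp (-(b * c / (b + c)) * x ^ 2) := by
  have complete_square : ∀ y : ℝ, -b * (y + c * x / (b + c)) ^ 2 - c * (x - (y + c * x / (b + c))) ^ 2
      = -(b + c) * y ^ 2 + -(b * c / (b + c)) * x ^ 2 := by
    intro y
    field_simp
    ring
  rw [← integral_add_right_eq_self _ (c * x / (b + c))]
  simp_rw [complete_square, exp_add, integral_mul_const, integral_gaussian]

lemma integrable_exp_neg_quadratic_prod (ha : 0 < a) (hb : 0 < b) (hc : 0 ≤ c) :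
    Integrable (fun q : ℝ × ℝ => exp (-a * q.1 ^ 2 - b * q.2 ^ 2 - c * (q.1 - q.2) ^ 2)) := by
  have hprod : Integrable (fun q : ℝ × ℝ => exp (-a * q.1 ^ 2) * exp (-b * q.2 ^ 2)) := by
    rw [Measure.volume_eq_prod]
    exact (integrable_exp_neg_mul_sq ha).mul_prod (integrable_exp_neg_mul_sq hb)
  refine hprod.mono (by fun_prop) (Filter.Eventually.of_forall fun q => ?_)
  rw [norm_of_nonneg (exp_pos _).le, norm_of_nonneg (by positivity), ← exp_add, exp_le_exp]
  nlinarith [mul_nonneg hc (sq_nonneg (q.1 - q.2))]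

lemma integral_exp_neg_quadratic_prod (ha : 0 < a) (hb : 0 < b) (hc : 0 ≤ c) :
    ∫ q : ℝ × ℝ, exp (-a * q.1 ^ 2 - b * q.2 ^ 2 - c * (q.1 - q.2) ^ 2) =
      π / √(a * b + b * c + c * a) := by
  have hbc : 0 < b + c := by linarith
  have inner : ∀ x : ℝ, ∫ y : ℝ, exp (-a * x ^ 2 - b * y ^ 2 - c * (x - y) ^ 2) =
      √(π / (b + c)) * exp (-(a + b * c / (b + c)) * x ^ 2) := by
    intro x
    have split : ∀ y : ℝ, exp (-a * x ^ 2 - b * y ^ 2 - c * (x - y) ^ 2) =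
        exp (-a * x ^ 2) * exp (-b * y ^ 2 - c * (x - y) ^ 2) := by
      intro y
      rw [← exp_add]
      ring_nf
    simp_rw [split, integral_const_mul, integral_exp_neg_mul_sq_sub_mul_sub_sq hbc.ne',
      mul_left_comm (exp _), ← exp_add]
    ring_nf
  have hint := integrable_exp_neg_quadratic_prod ha hb hc
  rw [Measure.volume_eq_prod] at hint ⊢
  rw [integral_prod _ hint]
  simp_rw [inner, integral_const_mul, integral_gaussian]
  rw [← sqrt_mul (by positivity), sqrt_eq_iff_eq_sq (by positivity) (by positivity), div_pow,
    sq_sqrt (by positivity)]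
  field_simp
  ring

end GaussianIntegrals

lemma psiGauss_sq (σ x : ℝ) :
    psiGauss σ x ^ 2 = (√(2 * π * σ ^ 2))⁻¹ * exp (-(2 * σ ^ 2)⁻¹ * x ^ 2) := by
  have hbase : 0 ≤ 2 * π * σ ^ 2 := by positivity
  rw [psiGauss, mul_pow, ← exp_nat_mul, ← rpow_natCast, ← rpow_mul hbase, sqrt_eq_rpow,
    ← rpow_neg hbase]
  congr 2
  · norm_num
  · push_cast
    ring

lemma psiGauss_mul_psiGauss_sq (σ x y : ℝ) :
    (psiGauss σ x * psiGauss σ y) ^ 2 =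
      (2 * π * σ ^ 2)⁻¹ * exp (-(2 * σ ^ 2)⁻¹ * x ^ 2 - (2 * σ ^ 2)⁻¹ * y ^ 2) := by
  have inv_sqrt_sq : (√(2 * π * σ ^ 2))⁻¹ * (√(2 * π * σ ^ 2))⁻¹ = (2 * π * σ ^ 2)⁻¹ := by
    rw [← mul_inv, mul_self_sqrt (by positivity)]
  rw [mul_pow, psiGauss_sq, psiGauss_sq, sub_eq_add_neg, ← neg_mul, exp_add, ← inv_sqrt_sq]
  ring

/-- For the Gaussian pure state `ρ(x,y) = ψ_σ(x)ψ_σ(y)` and the Gaussian dephasing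
kernel `g(ξ) = exp(-ξ²/(2ℓ²))`, the Hilbert–Schmidt dephasing loss equals
`C₂^g(ρ) = ∬ (1 - g(x-y)²)|ρ(x,y)|² dx dy = 1 − 1/√(1 + 4σ²/ℓ²)`. -/
theorem gaussian_C2_dephasing_loss (σ ℓ : ℝ) (hσ : 0 < σ) (hℓ : 0 < ℓ) :
    (∫ q : ℝ × ℝ,
        (1 - Real.exp (-((q.1 - q.2) ^ 2) / ℓ ^ 2)) *
          (psiGauss σ q.1 * psiGauss σ q.2) ^ 2) =
      1 - 1 / Real.sqrt (1 + 4 * σ ^ 2 / ℓ ^ 2) := by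
  set a : ℝ := (2 * σ ^ 2)⁻¹
  set c : ℝ := (ℓ ^ 2)⁻¹
  have ha : 0 < a := by positivity
  have hc : 0 < c := by positivity
  have integrand : ∀ q : ℝ × ℝ,
      (1 - exp (-((q.1 - q.2) ^ 2) / ℓ ^ 2)) * (psiGauss σ q.1 * psiGauss σ q.2) ^ 2 =
        (2 * π * σ ^ 2)⁻¹ * (exp (-a * q.1 ^ 2 - a * q.2 ^ 2 - 0 * (q.1 - q.2) ^ 2) -
          exp (-a * q.1 ^ 2 - a * q.2 ^ 2 - c * (q.1 - q.2) ^ 2)) := by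
    intro q
    rw [psiGauss_mul_psiGauss_sq, zero_mul, sub_zero, sub_eq_add_neg _ (c * _), exp_add, neg_div,
      div_eq_inv_mul]
    ring
  simp_rw [integrand]
  rw [integral_const_mul, integral_sub (integrable_exp_neg_quadratic_prod ha ha le_rfl)
    (integrable_exp_neg_quadratic_prod ha ha hc.le), integral_exp_neg_quadratic_prod ha ha le_rfl,
    integral_exp_neg_quadratic_prod ha ha hc.le]
  have sqrt_uncoupled : √(a * a + a * 0 + 0 * a) = a := by
    rw [mul_zero, zero_mul, add_zero, add_zero, sqrt_mul_self ha.le]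
  have sqrt_coupled : √(a * a + a * c + c * a) = √(1 + 4 * σ ^ 2 / ℓ ^ 2) * a := by
    rw [sqrt_eq_iff_eq_sq (by positivity) (by positivity), mul_pow, sq_sqrt (by positivity)]
    simp only [a, c]
    field_simp
    ring
  rw [sqrt_uncoupled, sqrt_coupled]
  simp only [a]
  field_simp
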